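/- For all n ≥ 0 and k ≥ 1, the number of lower k-run overpartitions of n is at most the number of lower k-run overpartitions of n+1, i.e., p̄_k(n) ≤ p̄_k(n+1). -/

import Mathlib

open scoped BigOperators
open Real

/-- An overpartition: a multiset of (non-overlined) positive parts together with a
finite set of overlined part sizes (the last occurrence of a part size may be overlined). -/
structure Overpartition where
  parts : Multiset ℕ
  overs : Finset ℕ
  parts_pos : ∀ p ∈ parts, 0 < p
  over_pos : ∀ p ∈ overs, 0 < p

/-- The size (sum of all parts) of an overpartition. -/
def Overpartition.size (μ : Overpartition) : ℕ := μ.parts.sum + ∑ p ∈ μ.overs, p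

/-- The number of parts of an overpartition. -/
def Overpartition.numParts (μ : Overpartition) : ℕ := Multiset.card μ.parts + μ.overs.card

/-- Lower `k`-run condition: every overlined part lies in a run of exactly `k` consecutive
overlined parts `j+1, …, j+k`, with no part of size `j` (overlined or not) and no overlined
part of size `j+k+1`. -/
def IsLowerKRun (k : ℕ) (μ : Overpartition) : Prop :=
  ∀ m ∈ μ.overs, ∃ j : ℕ, j + 1 ≤ m ∧ m ≤ j + k ∧
    (∀ i : ℕ, j + 1 ≤ i → i ≤ j + k → i ∈ μ.overs) ∧
    j ∉ μ.parts ∧ j ∉ μ.overs ∧ j + k + 1 ∉ μ.overs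

/-- Upper `k`-run condition: every overlined part lies in a run of overlined parts
`j+1, …, j+k`, with no overlined part of size `j` and no part of any kind of size `j+k+1`. -/
def IsUpperKRun (k : ℕ) (μ : Overpartition) : Prop :=
  ∀ m ∈ μ.overs, ∃ j : ℕ, j + 1 ≤ m ∧ m ≤ j + k ∧
    (∀ i : ℕ, j + 1 ≤ i → i ≤ j + k → i ∈ μ.overs) ∧
    j ∉ μ.overs ∧ j + k + 1 ∉ μ.parts ∧ j + k + 1 ∉ μ.overs

/-- `p̄ₖ(n)`, the number of lower `k`-run overpartitions of `n`. -/
noncomputable def lowerKRunCount (k n : ℕ) : ℕ :=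
  Nat.card {μ : Overpartition // μ.size = n ∧ IsLowerKRun k μ}

/-- The number of upper `k`-run overpartitions of `n`. -/
noncomputable def upperKRunCount (k n : ℕ) : ℕ :=
  Nat.card {μ : Overpartition // μ.size = n ∧ IsUpperKRun k μ}

/-- `p̄ₖ(ℓ,n)`, the number of upper `k`-run overpartitions of `n` with exactly `ℓ` parts. -/
noncomputable def upperKRunCount2 (k l n : ℕ) : ℕ :=
  Nat.card {μ : Overpartition // μ.size = n ∧ μ.numParts = l ∧ IsUpperKRun k μ}

/-- The one-variable generating function `Ḡₖ(q)` of lower `k`-run overpartitions. -/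
noncomputable def Gbar (k : ℕ) (q : ℂ) : ℂ := ∑' n : ℕ, (lowerKRunCount k n : ℂ) * q ^ n

/-- The two-variable generating function `Ḡₖ(x;q)` of `k`-run overpartitions. -/
noncomputable def Gbar2 (k : ℕ) (x q : ℂ) : ℂ :=
  ∑' p : ℕ × ℕ, (upperKRunCount2 k p.1 p.2 : ℂ) * x ^ p.1 * q ^ p.2

/-- The finite q-Pochhammer symbol `(a;q)ₙ`. -/
def qPoch (a q : ℂ) (n : ℕ) : ℂ := ∏ j ∈ Finset.range n, (1 - a * q ^ j)

/-- The infinite q-Pochhammer symbol `(a;q)_∞`. -/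
noncomputable def qPochInf (a q : ℂ) : ℂ := ∏' j : ℕ, (1 - a * q ^ j)

/-!
Adding a plain part `1` raises the size by one and keeps the lower `k`-run condition, unless `1`
is the base of a run, i.e. `1` is absent and `2` is overlined. In that case the run is
`2̄, …, (k+1)̄`, and we instead slide it down to `1̄, …, k̄` and add a plain part `k + 1`. The two
cases are told apart by whether the image has a part `1`, so the map is injective.
-/

attribute [ext] Overpartition

namespace Overpartition

lemma size_eq_sum_parts_add_overs (μ : Overpartition) :
    μ.size = (μ.parts + μ.overs.val).sum := by
  rw [size, Multiset.sum_add, Finset.sum_val]; rfl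

lemma finite_setOf_size_eq (n : ℕ) : {μ : Overpartition | μ.size = n}.Finite := by
  refine Set.Finite.of_finite_image (f := fun μ => (μ.parts + μ.overs.val, μ.overs)) ?_ ?_
  · refine ((Set.finite_range (Nat.Partition.parts (n := n))).prod
      (Finset.range (n + 1)).powerset.finite_toSet).subset ?_
    rintro _ ⟨μ, hμ, rfl⟩
    refine ⟨⟨⟨μ.parts + μ.overs.val, ?_, (size_eq_sum_parts_add_overs μ).symm.trans hμ⟩, rfl⟩, ?_⟩
    · intro p hp
      rcases Multiset.mem_add.1 hp with hp | hp
      exacts [μ.parts_pos p hp, μ.over_pos p hp]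
    · rw [Finset.mem_coe, Finset.mem_powerset]
      intro p hp
      have : p ≤ ∑ q ∈ μ.overs, q :=
        Finset.single_le_sum (f := fun q => q) (fun _ _ => Nat.zero_le _) hp
      exact Finset.mem_range_succ_iff.2 (hμ ▸ le_add_left this)
  · intro μ _ ν _ h
    obtain ⟨hsum, hovers⟩ := Prod.mk.inj h
    exact Overpartition.ext (add_right_cancel (hovers ▸ hsum)) hovers

def IsRunBase (μ : Overpartition) (j : ℕ) : Prop :=
  j ∉ μ.parts ∧ j ∉ μ.overs ∧ j + 1 ∈ μ.overs

instance (μ : Overpartition) (j : ℕ) : Decidable (μ.IsRunBase j) := by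
  unfold IsRunBase; infer_instance

def addPart (μ : Overpartition) (p : ℕ) (hp : 0 < p) : Overpartition where
  parts := p ::ₘ μ.parts
  overs := μ.overs
  parts_pos q hq := (Multiset.mem_cons.1 hq).elim (· ▸ hp) (μ.parts_pos q)
  over_pos := μ.over_pos

def shiftRunToOne (k : ℕ) (μ : Overpartition) : Overpartition where
  parts := μ.parts
  overs := insert 1 (μ.overs.erase (k + 1))
  parts_pos := μ.parts_pos
  over_pos q hq := (Finset.mem_insert.1 hq).elim (fun h => h ▸ Nat.one_pos)
    (fun h => μ.over_pos q (Finset.mem_of_mem_erase h))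

lemma size_addPart (μ : Overpartition) {p : ℕ} (hp : 0 < p) :
    (μ.addPart p hp).size = μ.size + p := by
  simp only [size, addPart, Multiset.sum_cons]; ring

lemma size_shiftRunToOne {k : ℕ} {μ : Overpartition} (hk : k + 1 ∈ μ.overs) (h1 : 1 ∉ μ.overs) :
    (μ.shiftRunToOne k).size + (k + 1) = μ.size + 1 := by
  have h1' : 1 ∉ μ.overs.erase (k + 1) := fun h => h1 (Finset.mem_of_mem_erase h)
  simp only [size, shiftRunToOne, Finset.sum_insert h1', ← Finset.sum_erase_add _ _ hk]
  ring

lemma addPart_injective {p : ℕ} (hp : 0 < p) :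
    Function.Injective fun μ : Overpartition => μ.addPart p hp := fun _ _ h =>
  have ⟨hparts, hovers⟩ := Overpartition.ext_iff.1 h
  Overpartition.ext ((Multiset.cons_inj_right p).1 hparts) hovers

lemma shiftRunToOne_injOn (k : ℕ) :
    Set.InjOn (shiftRunToOne k) {μ | k + 1 ∈ μ.overs ∧ 1 ∉ μ.overs} := by
  intro μ hμ ν hν h
  have recover : ∀ ρ : Overpartition, k + 1 ∈ ρ.overs ∧ 1 ∉ ρ.overs →
      insert (k + 1) (((ρ.shiftRunToOne k).overs).erase 1) = ρ.overs := fun ρ ⟨hk, h1⟩ => by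
    rw [shiftRunToOne, Finset.erase_insert (fun h => h1 (Finset.mem_of_mem_erase h)),
      Finset.insert_erase hk]
  exact Overpartition.ext (Overpartition.ext_iff.1 h).1
    (by rw [← recover μ hμ, ← recover ν hν, h])

end Overpartition

open Overpartition

namespace IsLowerKRun

variable {k : ℕ} {μ : Overpartition}

/-- Below a run base `j` the only admissible witness is `j` itself: a smaller one would put
`j` inside the run. -/
lemma run_of_isRunBase (hr : IsLowerKRun k μ) {j : ℕ} (hb : μ.IsRunBase j) :
    1 ≤ k ∧ (∀ i, j + 1 ≤ i → i ≤ j + k → i ∈ μ.overs) ∧ j + k + 1 ∉ μ.overs := by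
  obtain ⟨-, hjo, hj1⟩ := hb
  obtain ⟨j', hj'm, hmj', hrun, -, -, hend⟩ := hr (j + 1) hj1
  obtain rfl : j' = j := by
    by_contra hne
    exact hjo (hrun j (by omega) (by omega))
  exact ⟨by omega, hrun, hend⟩

lemma succ_mem_overs_of_isRunBase_one (hr : IsLowerKRun k μ) (hb : μ.IsRunBase 1) :
    k + 1 ∈ μ.overs :=
  have ⟨hk, hrun, _⟩ := hr.run_of_isRunBase hb
  hrun (k + 1) (by omega) (by omega)

lemma addPart (hr : IsLowerKRun k μ) {p : ℕ} (hp : 0 < p) (hb : ¬ μ.IsRunBase p) :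
    IsLowerKRun k (μ.addPart p hp) := by
  intro m hm
  obtain ⟨j, hjm, hmj, hrun, hjp, hjo, hend⟩ := hr m hm
  refine ⟨j, hjm, hmj, hrun, ?_, hjo, hend⟩
  intro hj
  rcases Multiset.mem_cons.1 hj with rfl | hj
  · exact hb ⟨hjp, hjo, hrun (j + 1) le_rfl (by omega)⟩
  · exact hjp hj

lemma shiftRunToOne (hr : IsLowerKRun k μ) (hb : μ.IsRunBase 1) :
    IsLowerKRun k (μ.shiftRunToOne k) := by
  obtain ⟨hk, hrun, hend⟩ := hr.run_of_isRunBase hb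
  intro m hm
  simp only [Overpartition.shiftRunToOne, Finset.mem_insert, Finset.mem_erase] at hm ⊢
  have zero_not_mem : 0 ∉ μ.parts ∧ 0 ∉ μ.overs :=
    ⟨fun h => (μ.parts_pos 0 h).false, fun h => (μ.over_pos 0 h).false⟩
  rcases le_or_gt m k with hmk | hkm
  · have hm1 : 1 ≤ m := hm.elim (·.ge) fun h => μ.over_pos m h.2
    refine ⟨0, by omega, by omega, fun i hi hik => ?_, zero_not_mem.1, ?_, ?_⟩
    · rcases eq_or_lt_of_le hi with rfl | hi
      · exact .inl rfl
      · exact .inr ⟨by omega, hrun i hi (by omega)⟩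
    · rintro (h | ⟨-, h⟩)
      exacts [zero_ne_one h, zero_not_mem.2 h]
    · rintro (h | ⟨h, -⟩) <;> omega
  · have hmo : m ∈ μ.overs := hm.resolve_left (by omega) |>.2
    obtain ⟨j, hjm, hmj, hrun', hjp, hjo, hend'⟩ := hr m hmo
    have hj : k + 2 ≤ j := by
      by_contra
      exact hend (hrun' (1 + k + 1) (by omega) (by omega))
    refine ⟨j, hjm, hmj, fun i hi hik => .inr ⟨by omega, hrun' i hi hik⟩, hjp, ?_, ?_⟩
    · rintro (h | ⟨-, h⟩)
      exacts [by omega, hjo h]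
    · rintro (h | ⟨-, h⟩)
      exacts [by omega, hend' h]

end IsLowerKRun

namespace Overpartition

variable {k : ℕ} {μ : Overpartition}

def bump (k : ℕ) (μ : Overpartition) : Overpartition :=
  if μ.IsRunBase 1 then (μ.shiftRunToOne k).addPart (k + 1) k.succ_pos
  else μ.addPart 1 Nat.one_pos

lemma size_bump (hr : IsLowerKRun k μ) : (μ.bump k).size = μ.size + 1 := by
  unfold bump
  split_ifs with hb
  · have := size_shiftRunToOne (hr.succ_mem_overs_of_isRunBase_one hb) hb.2.1
    rw [size_addPart]
    omega
  · exact size_addPart μ Nat.one_pos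

lemma _root_.IsLowerKRun.bump (hr : IsLowerKRun k μ) : IsLowerKRun k (μ.bump k) := by
  unfold Overpartition.bump
  split_ifs with hb
  · obtain ⟨-, -, hend⟩ := hr.run_of_isRunBase hb
    refine (hr.shiftRunToOne hb).addPart _ fun ⟨_, _, hk2⟩ => ?_
    simp only [shiftRunToOne, Finset.mem_insert, Finset.mem_erase] at hk2
    rcases hk2 with h | ⟨-, h⟩
    exacts [by omega, hend (by rwa [add_comm 1 k])]
  · exact hr.addPart Nat.one_pos hb

lemma one_mem_parts_bump_iff (hr : IsLowerKRun k μ) :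
    1 ∈ (μ.bump k).parts ↔ ¬ μ.IsRunBase 1 := by
  unfold bump
  split_ifs with hb
  · obtain ⟨hk, -, -⟩ := hr.run_of_isRunBase hb
    simp only [addPart, shiftRunToOne, Multiset.mem_cons, hb, not_true_eq_false, iff_false]
    rintro (h | h)
    exacts [by omega, hb.1 h]
  · simp only [addPart, Multiset.mem_cons_self, hb, not_false_eq_true]

lemma bump_injOn (k : ℕ) : Set.InjOn (bump k) {μ | IsLowerKRun k μ} := by
  intro μ hμ ν hν h
  have hb : μ.IsRunBase 1 ↔ ν.IsRunBase 1 := by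
    rw [← not_iff_not, ← one_mem_parts_bump_iff hμ, ← one_mem_parts_bump_iff hν, h]
  by_cases hμb : μ.IsRunBase 1
  · have hνb := hb.1 hμb
    simp only [bump, if_pos hμb, if_pos hνb] at h
    exact shiftRunToOne_injOn k ⟨hμ.succ_mem_overs_of_isRunBase_one hμb, hμb.2.1⟩
      ⟨hν.succ_mem_overs_of_isRunBase_one hνb, hνb.2.1⟩ (addPart_injective _ h)
  · simp only [bump, if_neg hμb, if_neg (hb.not.1 hμb)] at h
    exact addPart_injective _ h

end Overpartition

theorem lowerKRunCount_mono_general (n k : ℕ) :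
    lowerKRunCount k n ≤ lowerKRunCount k (n + 1) := by
  have : Finite {μ : Overpartition // μ.size = n + 1 ∧ IsLowerKRun k μ} :=
    ((finite_setOf_size_eq (n + 1)).subset fun _ h => h.1).to_subtype
  refine Nat.card_le_card_of_injective
    (fun μ => ⟨μ.1.bump k, by rw [size_bump μ.2.2, μ.2.1], μ.2.2.bump⟩) ?_
  rintro ⟨μ, _, hμ⟩ ⟨ν, _, hν⟩ h
  exact Subtype.ext (bump_injOn k hμ hν (congrArg Subtype.val h))

/-- p̄ₖ(n) ≤ p̄ₖ(n+1) for all n ≥ 0 and k ≥ 1. -/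
theorem lowerKRunCount_mono (n k : ℕ) (hk : 1 ≤ k) :
    lowerKRunCount k n ≤ lowerKRunCount k (n + 1) :=
  lowerKRunCount_mono_general n k
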